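/- arXiv:2310.05327 — 3 statements merged into one kernel-verified Lean document; each statement's English description precedes it below -/
import Mathlib

section
/- Let S ⊆ ℝ^{KM} be convex and let h be continuously differentiable on an open neighborhood of S with values in ℝ^{KM}, such that the total derivative Dh(z) is an invertible linear transformation of ℝ^{KM} for every z ∈ S, and such that for every z ∈ S and every i ∈ [K] there is exactly one j ∈ [K] with the Jacobian block ∂_j h_i(z) nonzero. Then there exists a single permutation π of [K], independent of z, such that for all z ∈ S and all i, j ∈ [K]: ∂_j h_i(z) ≠ 0 if and only if j = π(i); moreover, for every z ∈ S and every i ∈ [K] the block ∂_{π(i)} h_i(z) ∈ L(ℝ^M, ℝ^M) is invertible. -/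
open MeasureTheory Set Topology

noncomputable section

/-- The `k`-th slot (contiguous sub-vector) of `z ∈ ℝ^{K·M}`. -/
def slot {K M : ℕ} (k : Fin K) (z : EuclideanSpace ℝ (Fin K × Fin M)) :
    EuclideanSpace ℝ (Fin M) := WithLp.toLp 2 (fun m => z (k, m))

/-- Assemble a vector of `ℝ^{K·M}` from its `K` slots. -/
def unslot {K M : ℕ} (v : Fin K → EuclideanSpace ℝ (Fin M)) :
    EuclideanSpace ℝ (Fin K × Fin M) := WithLp.toLp 2 (fun p : Fin K × Fin M => v p.1 p.2)

/-- The continuous linear inclusion of the `j`-th slot. -/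
def slotIncl (K M : ℕ) (j : Fin K) :
    EuclideanSpace ℝ (Fin M) →L[ℝ] EuclideanSpace ℝ (Fin K × Fin M) :=
  LinearMap.toContinuousLinearMap
    { toFun := fun v => (WithLp.toLp 2 (fun p : Fin K × Fin M => if p.1 = j then v p.2 else 0) : EuclideanSpace ℝ (Fin K × Fin M))
      map_add' := by
        intro v w; ext p; by_cases h : p.1 = j <;> simp [h]
      map_smul' := by
        intro c v; ext p; by_cases h : p.1 = j <;> simp [h] }

/-- The continuous linear projection onto the `i`-th slot. -/
def slotProj (K M : ℕ) (i : Fin K) :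
    EuclideanSpace ℝ (Fin K × Fin M) →L[ℝ] EuclideanSpace ℝ (Fin M) :=
  LinearMap.toContinuousLinearMap
    { toFun := fun z => (WithLp.toLp 2 (fun m => z (i, m)) : EuclideanSpace ℝ (Fin M))
      map_add' := by intro v w; ext m; simp
      map_smul' := by intro c v; ext m; simp }

/-- `∂ₖ fₙ(z) ∈ ℝ^M`: the gradient block of the `n`-th coordinate of `f`
with respect to the `k`-th slot at `z`. -/
def slotPartial {K M N : ℕ} (f : EuclideanSpace ℝ (Fin K × Fin M) → EuclideanSpace ℝ (Fin N))
    (n : Fin N) (k : Fin K) (z : EuclideanSpace ℝ (Fin K × Fin M)) :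
    EuclideanSpace ℝ (Fin M) :=
  WithLp.toLp 2 (fun m => fderiv ℝ (fun w => f w n) z (slotIncl K M k (EuclideanSpace.single m 1)))

/-- `f` is compositional on `S`: every coordinate is locally influenced by at most one slot. -/
def IsCompositionalOn {K M N : ℕ}
    (f : EuclideanSpace ℝ (Fin K × Fin M) → EuclideanSpace ℝ (Fin N))
    (S : Set (EuclideanSpace ℝ (Fin K × Fin M))) : Prop :=
  ∀ z ∈ S, ∀ n : Fin N, ∀ k j : Fin K, k ≠ j →
    slotPartial f n k z ≠ 0 → slotPartial f n j z = 0

open Classical in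
/-- `I_k^f(z)`: the coordinates locally influenced by slot `k`. -/
def influenced {K M N : ℕ} (f : EuclideanSpace ℝ (Fin K × Fin M) → EuclideanSpace ℝ (Fin N))
    (z : EuclideanSpace ℝ (Fin K × Fin M)) (k : Fin K) : Finset (Fin N) :=
  Finset.univ.filter fun n => slotPartial f n k z ≠ 0

/-- The Jacobian matrix of the sub-vector `f_S` at `z`. -/
def jacMatrix {K M N : ℕ} (f : EuclideanSpace ℝ (Fin K × Fin M) → EuclideanSpace ℝ (Fin N))
    (z : EuclideanSpace ℝ (Fin K × Fin M)) (S : Finset (Fin N)) :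
    Matrix S (Fin K × Fin M) ℝ :=
  fun n p => fderiv ℝ (fun w => f w (n : Fin N)) z (EuclideanSpace.single p 1)

/-- `f` is irreducible on `S`. -/
def IsIrreducibleOn {K M N : ℕ}
    (f : EuclideanSpace ℝ (Fin K × Fin M) → EuclideanSpace ℝ (Fin N))
    (S : Set (EuclideanSpace ℝ (Fin K × Fin M))) : Prop :=
  ∀ z ∈ S, ∀ k : Fin K, ∀ S₁ S₂ : Finset (Fin N),
    Disjoint S₁ S₂ → S₁.Nonempty → S₂.Nonempty → S₁ ∪ S₂ = influenced f z k →
    (jacMatrix f z (influenced f z k)).rank < (jacMatrix f z S₁).rank + (jacMatrix f z S₂).rank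

/-- `g` is a `C^r`-diffeomorphism around the closed set `S` with values in `F`. -/
def IsDiffeoAround {E F : Type*} [NormedAddCommGroup E] [NormedSpace ℝ E]
    [NormedAddCommGroup F] [NormedSpace ℝ F] (r : ℕ) (g : E → F) (S : Set E) : Prop :=
  ∃ U : Set E, IsOpen U ∧ S ⊆ U ∧ ContDiffOn ℝ r g U ∧ S.InjOn g ∧
    ∀ z ∈ S, Function.Injective (fderiv ℝ g z)

/-- The product set `Z₁ × ⋯ × Z_K ⊆ ℝ^{K·M}`. -/
def prodSet {K M : ℕ} (Zk : Fin K → Set (EuclideanSpace ℝ (Fin M))) :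
    Set (EuclideanSpace ℝ (Fin K × Fin M)) :=
  {z | ∀ k, slot k z ∈ Zk k}

/-- `Z'` is a slot-supported subset of `Z₁ × ⋯ × Z_K`. -/
def IsSlotSupported {K M : ℕ} (Zk : Fin K → Set (EuclideanSpace ℝ (Fin M)))
    (Z' : Set (EuclideanSpace ℝ (Fin K × Fin M))) : Prop :=
  Z' ⊆ prodSet Zk ∧ ∀ k, slot k '' Z' = Zk k

/-- Topological support of a measure: points all of whose open neighbourhoods
have positive measure. -/
def measSupport {X : Type*} [TopologicalSpace X] [MeasurableSpace X]
    (p : Measure X) : Set X :=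
  {x | ∀ U : Set X, IsOpen U → x ∈ U → 0 < p U}

/-- The `(i,j)` Jacobian block (an `M×M` linear map) of `h : ℝ^{K·M} → ℝ^{K·M}` at `z`. -/
def jacBlock {K M : ℕ}
    (h : EuclideanSpace ℝ (Fin K × Fin M) → EuclideanSpace ℝ (Fin K × Fin M))
    (i j : Fin K) (z : EuclideanSpace ℝ (Fin K × Fin M)) :
    EuclideanSpace ℝ (Fin M) →L[ℝ] EuclideanSpace ℝ (Fin M) :=
  (slotProj K M i).comp ((fderiv ℝ h z).comp (slotIncl K M j))

/-- `∂ᵢ q(z) ∈ ℝ^M`: the gradient of `q : ℝ^{K·M} → ℝ` with respect to slot `i` at `z`. -/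
def slotGrad {K M : ℕ} (q : EuclideanSpace ℝ (Fin K × Fin M) → ℝ) (i : Fin K)
    (z : EuclideanSpace ℝ (Fin K × Fin M)) : EuclideanSpace ℝ (Fin M) :=
  WithLp.toLp 2 (fun m => fderiv ℝ q z (slotIncl K M i (EuclideanSpace.single m 1)))

/-- `∂ⱼ(∂ᵢ q)(z)`: the `M×M` Hessian block of `q` pairing slots `i` and `j` at `z`. -/
def hessBlock {K M : ℕ} (q : EuclideanSpace ℝ (Fin K × Fin M) → ℝ) (i j : Fin K)
    (z : EuclideanSpace ℝ (Fin K × Fin M)) :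
    EuclideanSpace ℝ (Fin M) →L[ℝ] EuclideanSpace ℝ (Fin M) :=
  (fderiv ℝ (slotGrad q i) z).comp (slotIncl K M j)


/-! The pattern of nonzero blocks is locally constant, since a nonzero block stays nonzero nearby
and each row has only one; on the connected set `S` it is therefore the pattern at one point.
Invertibility of `Dh` forces every block column to contain a nonzero block, so the pattern is a
permutation, and a block that is alone in its column inherits injectivity from `Dh`. -/

theorem IsPreconnected.ne_zero_iff_of_existsUnique {X ι Y : Type*} [TopologicalSpace X]
    [TopologicalSpace Y] [T1Space Y] [Zero Y] {S : Set X} (hS : IsPreconnected S)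
    {f : ι → X → Y} (hf : ∀ j, ContinuousOn (f j) S) (huniq : ∀ z ∈ S, ∃! j, f j z ≠ 0)
    {z₀ z : X} (hz₀ : z₀ ∈ S) (hz : z ∈ S) (j : ι) : f j z ≠ 0 ↔ f j z₀ ≠ 0 := by
  have : Nonempty ι := ⟨j⟩
  choose! g hg using fun z hz => (huniq z hz).exists
  let _ : TopologicalSpace ι := ⊥
  have : DiscreteTopology ι := ⟨rfl⟩
  have hg_cont : ContinuousOn g S := fun x hx => by
    change Filter.Tendsto g _ _
    rw [nhds_discrete, Filter.tendsto_pure]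
    filter_upwards [(hf (g x) x hx).eventually_ne (hg x hx), self_mem_nhdsWithin]
      with y hy hyS using (huniq y hyS).unique (hg y hyS) hy
  have hg_eq : g z = g z₀ := hS.constant hg_cont hz hz₀
  have hg_iff : ∀ y ∈ S, f j y ≠ 0 ↔ j = g y := fun y hy =>
    ⟨fun hj => (huniq y hy).unique hj (hg y hy), fun hj => hj ▸ hg y hy⟩
  rw [hg_iff z hz, hg_iff z₀ hz₀, hg_eq]

section SlotBlocks

variable {K M : ℕ}

def slotBlock (A : EuclideanSpace ℝ (Fin K × Fin M) →L[ℝ] EuclideanSpace ℝ (Fin K × Fin M))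
    (i j : Fin K) : EuclideanSpace ℝ (Fin M) →L[ℝ] EuclideanSpace ℝ (Fin M) :=
  (slotProj K M i).comp (A.comp (slotIncl K M j))

theorem ext_slotProj {x y : EuclideanSpace ℝ (Fin K × Fin M)}
    (hxy : ∀ i, slotProj K M i x = slotProj K M i y) : x = y := by
  ext p
  exact congrArg (fun v => v p.2) (hxy p.1)

theorem slotProj_slotIncl_self (j : Fin K) (v : EuclideanSpace ℝ (Fin M)) :
    slotProj K M j (slotIncl K M j v) = v := by
  ext m
  simp [slotProj, slotIncl]

theorem slotIncl_injective (j : Fin K) : Function.Injective (slotIncl K M j) :=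
  Function.LeftInverse.injective (slotProj_slotIncl_self j)

theorem exists_slotBlock_ne_zero (hM : 0 < M)
    {A : EuclideanSpace ℝ (Fin K × Fin M) →L[ℝ] EuclideanSpace ℝ (Fin K × Fin M)}
    (hA : Function.Injective A) (j : Fin K) : ∃ i, slotBlock A i j ≠ 0 := by
  by_contra! hcol
  have : Nonempty (Fin M) := ⟨⟨0, hM⟩⟩
  obtain ⟨v, hv⟩ := exists_ne (0 : EuclideanSpace ℝ (Fin M))
  refine hv (slotIncl_injective j (hA ?_))
  rw [map_zero, map_zero]
  exact ext_slotProj fun i => (congrArg (· v) (hcol i)).trans (map_zero _).symm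

theorem slotBlock_injective
    {A : EuclideanSpace ℝ (Fin K × Fin M) →L[ℝ] EuclideanSpace ℝ (Fin K × Fin M)}
    (hA : Function.Injective A) {i j : Fin K} (hcol : ∀ i' ≠ i, slotBlock A i' j = 0) :
    Function.Injective (slotBlock A i j) := by
  intro v w hvw
  refine slotIncl_injective j (hA (ext_slotProj fun i' => ?_))
  rcases eq_or_ne i' i with rfl | hi'
  · exact hvw
  · change slotBlock A i' j v = slotBlock A i' j w
    rw [hcol i' hi', zero_apply, zero_apply]

theorem continuousOn_jacBlock {U : Set (EuclideanSpace ℝ (Fin K × Fin M))} (hU : IsOpen U)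
    {h : EuclideanSpace ℝ (Fin K × Fin M) → EuclideanSpace ℝ (Fin K × Fin M)}
    (hh : ContDiffOn ℝ 1 h U) (i j : Fin K) : ContinuousOn (jacBlock h i j) U :=
  continuousOn_const.clm_comp
    ((hh.continuousOn_fderiv_of_isOpen hU le_rfl).clm_comp continuousOn_const)

end SlotBlocks

theorem global_permutation_of_jacobian_blocks_general
    (K M : ℕ) (hM : 0 < M)
    (S U : Set (EuclideanSpace ℝ (Fin K × Fin M)))
    (hSconv : Convex ℝ S) (hU : IsOpen U) (hSU : S ⊆ U)
    (h : EuclideanSpace ℝ (Fin K × Fin M) → EuclideanSpace ℝ (Fin K × Fin M))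
    (hh : ContDiffOn ℝ 1 h U)
    (hDh : ∀ z ∈ S, Function.Bijective (fderiv ℝ h z))
    (huniq : ∀ z ∈ S, ∀ i : Fin K, ∃! j : Fin K, jacBlock h i j z ≠ 0) :
    ∃ π : Equiv.Perm (Fin K),
      (∀ z ∈ S, ∀ i j : Fin K, jacBlock h i j z ≠ 0 ↔ j = π i) ∧
      (∀ z ∈ S, ∀ i : Fin K, Function.Bijective ⇑(jacBlock h i (π i) z)) := by
  rcases S.eq_empty_or_nonempty with rfl | ⟨z₀, hz₀⟩
  · exact ⟨1, by simp, by simp⟩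
  choose σ hσ using fun i => (huniq z₀ hz₀ i).exists
  have hpattern : ∀ z ∈ S, ∀ i j, jacBlock h i j z ≠ 0 ↔ j = σ i := fun z hz i j => by
    rw [hSconv.isPreconnected.ne_zero_iff_of_existsUnique
      (fun j => (continuousOn_jacBlock hU hh i j).mono hSU) (huniq · · i) hz₀ hz]
    exact ⟨fun hj => (huniq z₀ hz₀ i).unique hj (hσ i), fun hj => hj ▸ hσ i⟩
  have hσ_surj : Function.Surjective σ := fun j => by
    obtain ⟨i, hi⟩ := exists_slotBlock_ne_zero hM (hDh z₀ hz₀).1 j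
    exact ⟨i, ((hpattern z₀ hz₀ i j).1 hi).symm⟩
  have hσ_inj : Function.Injective σ := Finite.injective_iff_surjective.2 hσ_surj
  refine ⟨Equiv.ofBijective σ ⟨hσ_inj, hσ_surj⟩, hpattern, fun z hz i => ?_⟩
  have hinj : Function.Injective (jacBlock h i (σ i) z) :=
    slotBlock_injective (hDh z hz).1 fun i' hi' => not_not.1 fun hne =>
      hi' (hσ_inj ((hpattern z hz i' (σ i)).1 hne).symm)
  exact ⟨hinj, LinearMap.injective_iff_surjective.1 hinj⟩

/-- A blockwise-sparse diffeomorphic Jacobian on a convex set has a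
globally consistent permutation structure, with invertible diagonal-pattern blocks. -/
theorem global_permutation_of_jacobian_blocks
    (K M : ℕ) (hK : 0 < K) (hM : 0 < M)
    (S U : Set (EuclideanSpace ℝ (Fin K × Fin M)))
    (hSconv : Convex ℝ S) (hU : IsOpen U) (hSU : S ⊆ U)
    (h : EuclideanSpace ℝ (Fin K × Fin M) → EuclideanSpace ℝ (Fin K × Fin M))
    (hh : ContDiffOn ℝ 1 h U)
    (hDh : ∀ z ∈ S, Function.Bijective (fderiv ℝ h z))
    (huniq : ∀ z ∈ S, ∀ i : Fin K, ∃! j : Fin K, jacBlock h i j z ≠ 0) :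
    ∃ π : Equiv.Perm (Fin K),
      (∀ z ∈ S, ∀ i j : Fin K, jacBlock h i j z ≠ 0 ↔ j = π i) ∧
      (∀ z ∈ S, ∀ i : Fin K, Function.Bijective ⇑(jacBlock h i (π i) z)) :=
  global_permutation_of_jacobian_blocks_general K M hM S U hSconv hU hSU h hh hDh huniq

end
end

section
/- (Compositionality implies additivity.) Let Z = Z₁ × ⋯ × Z_K with each Z_k ⊆ ℝ^M convex, and let f be twice continuously differentiable and compositional on an open set U ⊆ ℝ^{KM} containing Z, with values in ℝ^N. Then f is additive on Z: there exist functions f_k: Z_k → ℝ^N, k ∈ [K], such that f(z) = ∑_{k=1}^K f_k(z_k) for every z ∈ Z. -/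
/-!
Compositionality forces the mixed second derivatives `∂ⱼ∂ₖ fₙ` (`j ≠ k`) to vanish on `U`: near a
point where `∂ₖ fₙ ≠ 0` the block `∂ⱼ fₙ` vanishes identically, hence so does its derivative; near a
point with no such neighbours `∂ₖ fₙ` vanishes identically and the symmetry of the Hessian applies;
by continuity this covers all of `U`. Vanishing mixed derivatives make `∂ₖ fₙ` blind to the other
slots along segments of the convex box `Z`, so with `δₖ` the `k`-th slot of `b - a`, the function
`t ↦ f (a + t (b - a)) - ∑ₖ f (a + t δₖ)` has zero derivative on `[0, 1]`. Comparing `t = 0` and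
`t = 1` gives `f b = f a + ∑ₖ (f (a + δₖ) - f a)`.
-/

open MeasureTheory Set Topology

noncomputable section

section Calculus

variable {E F : Type*} [NormedAddCommGroup E] [NormedSpace ℝ E]
  [NormedAddCommGroup F] [NormedSpace ℝ F]

theorem eq_of_forall_hasDerivAt_zero {g : ℝ → F} (hg : ∀ t ∈ Icc (0 : ℝ) 1, HasDerivAt g 0 t) :
    g 1 = g 0 :=
  constant_of_has_deriv_right_zero
    (fun t ht => (hg t ht).continuousAt.continuousWithinAt)
    (fun t ht => (hg t (Ico_subset_Icc_self ht)).hasDerivWithinAt) 1 (right_mem_Icc.2 zero_le_one)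

theorem HasFDerivAt.hasDerivAt_add_smul {G : Type*} [NormedAddCommGroup G] [NormedSpace ℝ G]
    {g : E → G} {g' : E →L[ℝ] G} {c u : E} {t : ℝ} (hg : HasFDerivAt g g' (c + t • u)) :
    HasDerivAt (fun s : ℝ => g (c + s • u)) (g' u) t :=
  hg.comp_hasDerivAt t (by simpa using ((hasDerivAt_id t).smul_const u).const_add c)

theorem fderiv_fderiv_apply_eq_zero_of_eventually {q : E → F} {y w : E}
    (hq : DifferentiableAt ℝ (fderiv ℝ q) y) (h : ∀ᶠ x in 𝓝 y, fderiv ℝ q x w = 0) (d : E) :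
    fderiv ℝ (fderiv ℝ q) y d w = 0 := by
  have hderiv : HasFDerivAt (fun x => fderiv ℝ q x w)
      ((ContinuousLinearMap.apply ℝ F w).comp (fderiv ℝ (fderiv ℝ q) y)) y :=
    (ContinuousLinearMap.apply ℝ F w).hasFDerivAt.comp y hq.hasFDerivAt
  simpa using congr($(hderiv.unique ((hasFDerivAt_const 0 y).congr_of_eventuallyEq h)) d)

variable {U : Set E} {q : E → F}

theorem fderiv_fderiv_apply_eq_zero_of_forall_or (hU : IsOpen U) (hq : ContDiffOn ℝ 2 q U)
    {u v : E} (huv : ∀ x ∈ U, fderiv ℝ q x u = 0 ∨ fderiv ℝ q x v = 0) {x : E} (hx : x ∈ U) :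
    fderiv ℝ (fderiv ℝ q) x u v = 0 := by
  have hd2 : DifferentiableOn ℝ (fderiv ℝ q) U :=
    (hq.fderiv_of_isOpen hU (by norm_num : (1 : WithTop ℕ∞) + 1 ≤ 2)).differentiableOn one_ne_zero
  by_cases hu : ∀ᶠ y in 𝓝 x, fderiv ℝ q y u = 0
  · rw [(hq.contDiffAt (hU.mem_nhds hx)).isSymmSndFDerivAt (by simp) u v]
    exact fderiv_fderiv_apply_eq_zero_of_eventually (hd2.differentiableAt (hU.mem_nhds hx)) hu v
  by_contra hT
  have hcont : ContinuousOn (fun y => fderiv ℝ (fderiv ℝ q) y u v) U :=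
    ((hq.fderiv_of_isOpen hU le_rfl).continuousOn_fderiv_of_isOpen hU le_rfl).clm_apply
      continuousOn_const |>.clm_apply continuousOn_const
  obtain ⟨y, hyu, hyU, hyT⟩ := (Filter.not_eventually.1 hu).and_eventually
    ((hU.eventually_mem hx).and ((hcont.continuousAt (hU.mem_nhds hx)).eventually_ne hT)) |>.exists
  have hcu : ContinuousAt (fun z => fderiv ℝ q z u) y :=
    ((hq.continuousOn_fderiv_of_isOpen hU (by norm_num)).clm_apply continuousOn_const).continuousAt
      (hU.mem_nhds hyU)
  have hv : ∀ᶠ z in 𝓝 y, fderiv ℝ q z v = 0 := by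
    filter_upwards [hcu.eventually_ne hyu, hU.eventually_mem hyU] with z hzu hzU
    exact (huv z hzU).resolve_left hzu
  exact hyT (fderiv_fderiv_apply_eq_zero_of_eventually (hd2.differentiableAt (hU.mem_nhds hyU)) hv u)

theorem fderiv_add_apply_eq_of_fderiv_fderiv_eq_zero (hU : IsOpen U) (hq : ContDiffOn ℝ 2 q U)
    {c u : E} (hseg : ∀ s ∈ Icc (0 : ℝ) 1, c + s • u ∈ U) {v : E}
    (huv : ∀ s ∈ Icc (0 : ℝ) 1, fderiv ℝ (fderiv ℝ q) (c + s • u) u v = 0) :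
    fderiv ℝ q (c + u) v = fderiv ℝ q c v := by
  have hd2 : DifferentiableOn ℝ (fderiv ℝ q) U :=
    (hq.fderiv_of_isOpen hU (by norm_num : (1 : WithTop ℕ∞) + 1 ≤ 2)).differentiableOn one_ne_zero
  simpa using eq_of_forall_hasDerivAt_zero (g := fun s : ℝ => fderiv ℝ q (c + s • u) v) fun s hs => by
    have := ((hd2.differentiableAt (hU.mem_nhds (hseg s hs))).hasFDerivAt.hasDerivAt_add_smul).clm_apply
      (hasDerivAt_const s v)
    simpa [huv s hs] using this

end Calculus

section Slots

variable {K M : ℕ}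

theorem slot_add (k : Fin K) (x y : EuclideanSpace ℝ (Fin K × Fin M)) :
    slot k (x + y) = slot k x + slot k y := by
  ext; simp [slot]

theorem slot_sub (k : Fin K) (x y : EuclideanSpace ℝ (Fin K × Fin M)) :
    slot k (x - y) = slot k x - slot k y := by
  ext; simp [slot]

theorem slot_smul (k : Fin K) (t : ℝ) (x : EuclideanSpace ℝ (Fin K × Fin M)) :
    slot k (t • x) = t • slot k x := by
  ext; simp [slot]

theorem slot_slotIncl (l j : Fin K) (v : EuclideanSpace ℝ (Fin M)) :
    slot l (slotIncl K M j v) = if l = j then v else 0 := by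
  by_cases h : l = j <;> ext <;> simp [slot, slotIncl, h]

theorem sum_slotIncl_slot (x : EuclideanSpace ℝ (Fin K × Fin M)) :
    ∑ k, slotIncl K M k (slot k x) = x := by
  ext p
  simp [slotIncl, slot, WithLp.ofLp_sum]

theorem convex_prodSet {Zk : Fin K → Set (EuclideanSpace ℝ (Fin M))} (hZk : ∀ k, Convex ℝ (Zk k)) :
    Convex ℝ (prodSet Zk) := by
  have : prodSet Zk = ⋂ k, slotProj K M k ⁻¹' Zk k := by ext; simp [prodSet]; rfl
  rw [this]
  exact convex_iInter fun k => (hZk k).linear_preimage (slotProj K M k).toLinearMap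

theorem slotPartial_eq_zero_iff {N : ℕ}
    (f : EuclideanSpace ℝ (Fin K × Fin M) → EuclideanSpace ℝ (Fin N)) (n : Fin N) (k : Fin K)
    (z : EuclideanSpace ℝ (Fin K × Fin M)) :
    slotPartial f n k z = 0 ↔ ∀ v, fderiv ℝ (fun w => f w n) z (slotIncl K M k v) = 0 := by
  refine ⟨fun h v => ?_, fun h => by ext m; simp [slotPartial, h]⟩
  have hL : ((fderiv ℝ (fun w => f w n) z).comp (slotIncl K M k)).toLinearMap = 0 :=
    (EuclideanSpace.basisFun (Fin M) ℝ).toBasis.ext fun m => by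
      simpa [slotPartial] using congr(($h) m)
  simpa using congr($hL v)

end Slots

section SlotCalculus

variable {K M : ℕ} {F : Type*} [NormedAddCommGroup F] [NormedSpace ℝ F]
  {Zk : Fin K → Set (EuclideanSpace ℝ (Fin M))} {U : Set (EuclideanSpace ℝ (Fin K × Fin M))}
  {q : EuclideanSpace ℝ (Fin K × Fin M) → F}

theorem fderiv_slotIncl_eq_of_slot_eq (hZk : ∀ k, Convex ℝ (Zk k)) (hU : IsOpen U)
    (hZU : prodSet Zk ⊆ U) (hq : ContDiffOn ℝ 2 q U)
    (hmixed : ∀ x ∈ U, ∀ j k : Fin K, j ≠ k → ∀ v w,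
      fderiv ℝ (fderiv ℝ q) x (slotIncl K M j v) (slotIncl K M k w) = 0)
    {x y : EuclideanSpace ℝ (Fin K × Fin M)} (hx : x ∈ prodSet Zk) (hy : y ∈ prodSet Zk)
    {k : Fin K} (hxy : slot k x = slot k y) (w : EuclideanSpace ℝ (Fin M)) :
    fderiv ℝ q x (slotIncl K M k w) = fderiv ℝ q y (slotIncl K M k w) := by
  have hd : x - y = ∑ j ∈ Finset.univ.erase k, slotIncl K M j (slot j (x - y)) := by
    conv_lhs => rw [← sum_slotIncl_slot (x - y), ← Finset.add_sum_erase _ _ (Finset.mem_univ k)]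
    rw [slot_sub, hxy, sub_self, map_zero, zero_add]
  have hmix : ∀ z ∈ U, fderiv ℝ (fderiv ℝ q) z (x - y) (slotIncl K M k w) = 0 := fun z hz => by
    rw [hd, map_sum, sum_apply]
    exact Finset.sum_eq_zero fun j hj => hmixed z hz j k (Finset.ne_of_mem_erase hj) _ _
  have hseg : ∀ s ∈ Icc (0 : ℝ) 1, y + s • (x - y) ∈ U :=
    fun s hs => hZU ((convex_prodSet hZk).add_smul_sub_mem hy hx hs)
  simpa using fderiv_add_apply_eq_of_fderiv_fderiv_eq_zero hU hq hseg fun s hs => hmix _ (hseg s hs)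

theorem eq_add_sum_sub_of_fderiv_fderiv_slotIncl_eq_zero (hZk : ∀ k, Convex ℝ (Zk k))
    (hU : IsOpen U) (hZU : prodSet Zk ⊆ U) (hq : ContDiffOn ℝ 2 q U)
    (hmixed : ∀ x ∈ U, ∀ j k : Fin K, j ≠ k → ∀ v w,
      fderiv ℝ (fderiv ℝ q) x (slotIncl K M j v) (slotIncl K M k w) = 0)
    {a b : EuclideanSpace ℝ (Fin K × Fin M)} (ha : a ∈ prodSet Zk) (hb : b ∈ prodSet Zk) :
    q b = q a + ∑ k, (q (a + slotIncl K M k (slot k b - slot k a)) - q a) := by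
  set δ : Fin K → EuclideanSpace ℝ (Fin K × Fin M) := fun k => slotIncl K M k (slot k b - slot k a)
  have hsum : ∑ k, δ k = b - a := by
    simp only [δ, map_sub, Finset.sum_sub_distrib, sum_slotIncl_slot]
  have hline : ∀ t ∈ Icc (0 : ℝ) 1, a + t • (b - a) ∈ prodSet Zk := fun t ht =>
    (convex_prodSet hZk).add_smul_sub_mem ha hb ht
  have hdiag : ∀ k, ∀ t ∈ Icc (0 : ℝ) 1, a + t • δ k ∈ prodSet Zk := fun k t ht l => by
    by_cases hl : l = k
    · subst hl
      simpa only [δ, slot_add, slot_smul, slot_slotIncl, if_pos] using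
        (hZk l).add_smul_sub_mem (ha l) (hb l) ht
    · simpa only [δ, slot_add, slot_smul, slot_slotIncl, if_neg hl, smul_zero, add_zero] using ha l
  have hslot : ∀ k, ∀ t ∈ Icc (0 : ℝ) 1,
      fderiv ℝ q (a + t • (b - a)) (δ k) = fderiv ℝ q (a + t • δ k) (δ k) := fun k t ht =>
    fderiv_slotIncl_eq_of_slot_eq hZk hU hZU hq hmixed (hline t ht) (hdiag k t ht)
      (by simp only [δ, slot_add, slot_smul, slot_sub, slot_slotIncl, if_pos]) _
  have hdiff : ∀ x ∈ U, HasFDerivAt q (fderiv ℝ q x) x := fun x hx =>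
    ((hq.differentiableOn two_ne_zero).differentiableAt (hU.mem_nhds hx)).hasFDerivAt
  have hconst := eq_of_forall_hasDerivAt_zero
    (g := fun t : ℝ => q (a + t • (b - a)) - ∑ k, q (a + t • δ k)) fun t ht => by
      convert (hdiff _ (hZU (hline t ht))).hasDerivAt_add_smul.sub
        (HasDerivAt.sum (u := Finset.univ) fun k _ =>
          (hdiff _ (hZU (hdiag k t ht))).hasDerivAt_add_smul) using 1
      · ext s
        simp only [Pi.sub_apply, Finset.sum_apply]
      · have hsplit : fderiv ℝ q (a + t • (b - a)) (b - a) =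
            ∑ k, fderiv ℝ q (a + t • (b - a)) (δ k) := by rw [← map_sum, hsum]
        rw [hsplit, ← Finset.sum_sub_distrib,
          Finset.sum_eq_zero fun k _ => sub_eq_zero.2 (hslot k t ht)]
  simp only [one_smul, zero_smul, add_zero, add_sub_cancel] at hconst
  rw [Finset.sum_sub_distrib, ← sub_eq_iff_eq_add', sub_eq_sub_iff_sub_eq_sub.mp hconst]

end SlotCalculus

theorem IsCompositionalOn.fderiv_fderiv_slotIncl_eq_zero {K M N : ℕ}
    {f : EuclideanSpace ℝ (Fin K × Fin M) → EuclideanSpace ℝ (Fin N)}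
    {U : Set (EuclideanSpace ℝ (Fin K × Fin M))} (hcomp : IsCompositionalOn f U) (hU : IsOpen U)
    {n : Fin N} (hfn : ContDiffOn ℝ 2 (fun z => f z n) U) :
    ∀ x ∈ U, ∀ j k : Fin K, j ≠ k → ∀ v w,
      fderiv ℝ (fderiv ℝ fun z => f z n) x (slotIncl K M j v) (slotIncl K M k w) = 0 := by
  intro x hx j k hjk v w
  refine fderiv_fderiv_apply_eq_zero_of_forall_or hU hfn (fun y hy => ?_) hx
  by_cases hj : slotPartial f n j y = 0
  · exact .inl ((slotPartial_eq_zero_iff f n j y).1 hj v)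
  · exact .inr ((slotPartial_eq_zero_iff f n k y).1 (hcomp y hy n j k hjk hj) w)

theorem compositional_implies_additive_general
    (K M N : ℕ) (hK : 0 < K)
    (Zk : Fin K → Set (EuclideanSpace ℝ (Fin M))) (hZkconv : ∀ k, Convex ℝ (Zk k))
    (U : Set (EuclideanSpace ℝ (Fin K × Fin M))) (hU : IsOpen U) (hZU : prodSet Zk ⊆ U)
    (f : EuclideanSpace ℝ (Fin K × Fin M) → EuclideanSpace ℝ (Fin N))
    (hf : ContDiffOn ℝ 2 f U) (hcomp : IsCompositionalOn f U) :
    ∃ fk : Fin K → (EuclideanSpace ℝ (Fin M) → EuclideanSpace ℝ (Fin N)),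
      ∀ z ∈ prodSet Zk, f z = ∑ k : Fin K, fk k (slot k z) := by
  rcases (prodSet Zk).eq_empty_or_nonempty with hZ | ⟨z₀, hz₀⟩
  · exact ⟨fun _ _ => 0, fun z hz => by simp [hZ] at hz⟩
  have hadd : ∀ z ∈ prodSet Zk,
      f z = f z₀ + ∑ k, (f (z₀ + slotIncl K M k (slot k z - slot k z₀)) - f z₀) := by
    intro z hz
    ext n
    have hfn : ContDiffOn ℝ 2 (fun w => f w n) U :=
      (EuclideanSpace.proj n : EuclideanSpace ℝ (Fin N) →L[ℝ] ℝ).contDiff.comp_contDiffOn hf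
    simpa [WithLp.ofLp_sum] using eq_add_sum_sub_of_fderiv_fderiv_slotIncl_eq_zero hZkconv hU hZU
      hfn (hcomp.fderiv_fderiv_slotIncl_eq_zero hU hfn) hz₀ hz
  -- The constant `f z₀` is carried by one arbitrarily chosen slot.
  refine ⟨fun k v => f (z₀ + slotIncl K M k (v - slot k z₀)) - f z₀ +
    if k = ⟨0, hK⟩ then f z₀ else 0, fun z hz => ?_⟩
  rw [hadd z hz, Finset.sum_add_distrib, Finset.sum_ite_eq', if_pos (Finset.mem_univ _), add_comm]

/-- Compositionality implies additivity. -/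
theorem compositional_implies_additive
    (K M N : ℕ) (hK : 0 < K) (hM : 0 < M) (hN : 0 < N)
    (Zk : Fin K → Set (EuclideanSpace ℝ (Fin M))) (hZkconv : ∀ k, Convex ℝ (Zk k))
    (U : Set (EuclideanSpace ℝ (Fin K × Fin M))) (hU : IsOpen U) (hZU : prodSet Zk ⊆ U)
    (f : EuclideanSpace ℝ (Fin K × Fin M) → EuclideanSpace ℝ (Fin N))
    (hf : ContDiffOn ℝ 2 f U) (hcomp : IsCompositionalOn f U) :
    ∃ fk : Fin K → (EuclideanSpace ℝ (Fin M) → EuclideanSpace ℝ (Fin N)),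
      ∀ z ∈ prodSet Zk, f z = ∑ k : Fin K, fk k (slot k z) :=
  compositional_implies_additive_general K M N hK Zk hZkconv U hU hZU f hf hcomp
end
end

section
/- Let U ⊆ ℝ^{KM} be open and let q: U → ℝ be twice continuously differentiable such that for every z ∈ U and every pair k ≠ j in [K], not both of the slot gradients ∂_k q(z) and ∂_j q(z) are nonzero. Then all cross-slot mixed second derivatives of q vanish: for every z ∈ U and every i ≠ j in [K], the M×M Hessian block ∂_j(∂_i q)(z) = 0. -/
open MeasureTheory Set Topology

noncomputable section

/-! If two differentiable maps `f` and `g` satisfy `f w = 0 ∨ g w = 0` near `x`, then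
`Df(x) = 0` or `Dg(x) = 0`: along a direction `v` with `Df(x) v ≠ 0`, `f` is nonzero on a
punctured line through `x`, so `g` vanishes on that line and `Dg(x) v = 0`; and a linear map
vanishing off the kernel of a nonzero linear map vanishes identically. Applied to `∂ᵢq` and
`∂ⱼq`, this kills the `(i, j)` or the `(j, i)` Hessian block, hence both by Schwarz's theorem. -/

theorem ContinuousLinearMap.eq_zero_or_eq_zero_of_forall_apply_eq_zero_or
    {R M N P : Type*} [Semiring R] [TopologicalSpace M] [AddCommMonoid M] [Module R M]
    [TopologicalSpace N] [AddCommMonoid N] [Module R N]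
    [TopologicalSpace P] [AddCommMonoid P] [Module R P] {φ : M →L[R] N} {ψ : M →L[R] P}
    (h : ∀ v, φ v = 0 ∨ ψ v = 0) : φ = 0 ∨ ψ = 0 := by
  by_contra! hne
  obtain ⟨v, hv⟩ : ∃ v, φ v ≠ 0 := by simpa [ContinuousLinearMap.ext_iff] using hne.1
  obtain ⟨u, hu⟩ : ∃ u, ψ u ≠ 0 := by simpa [ContinuousLinearMap.ext_iff] using hne.2
  have hφu : φ u = 0 := (h u).resolve_right hu
  have hψv : ψ v = 0 := (h v).resolve_left hv
  have hφvu : φ (v + u) ≠ 0 := by simpa [hφu] using hv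
  have hψvu : ψ (v + u) ≠ 0 := by simpa [hψv] using hu
  exact (h (v + u)).elim hφvu hψvu

section

variable {𝕜 E F G : Type*} [NontriviallyNormedField 𝕜]
  [NormedAddCommGroup E] [NormedSpace 𝕜 E] [NormedAddCommGroup F] [NormedSpace 𝕜 F]
  [NormedAddCommGroup G] [NormedSpace 𝕜 G]

theorem fderiv_apply_eq_zero_or_fderiv_apply_eq_zero {f : E → F} {g : E → G} {x : E}
    (hf : DifferentiableAt 𝕜 f x) (hg : DifferentiableAt 𝕜 g x)
    (hfg : ∀ᶠ w in 𝓝 x, f w = 0 ∨ g w = 0) (v : E) :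
    fderiv 𝕜 f x v = 0 ∨ fderiv 𝕜 g x v = 0 := by
  rw [or_iff_not_imp_left]
  intro hv
  set ℓ : 𝕜 → E := fun t => x + t • v
  have hℓ0 : x = ℓ 0 := by simp [ℓ]
  have hℓ : HasDerivAt ℓ v 0 := by
    simpa only [id, one_smul] using ((hasDerivAt_id (0 : 𝕜)).smul_const v).const_add x
  have hfg_line : ∀ᶠ t in 𝓝 (0 : 𝕜), f (ℓ t) = 0 ∨ g (ℓ t) = 0 :=
    hℓ.continuousAt.tendsto.eventually (hℓ0 ▸ hfg)
  have hf_ne : ∀ᶠ t in 𝓝[≠] (0 : 𝕜), f (ℓ t) ≠ 0 :=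
    (hf.hasFDerivAt.comp_hasDerivAt_of_eq 0 hℓ hℓ0).eventually_ne hv
  have hg_zero : ∀ᶠ t in 𝓝[≠] (0 : 𝕜), g (ℓ t) = 0 := by
    filter_upwards [hf_ne, nhdsWithin_le_nhds hfg_line] with t h1 h2
    exact h2.resolve_left h1
  have hg_ℓ0 : g (ℓ 0) = 0 :=
    tendsto_nhds_unique (((hℓ0 ▸ hg.continuousAt).comp hℓ.continuousAt).tendsto.mono_left
      nhdsWithin_le_nhds) (tendsto_const_nhds.congr' (hg_zero.mono fun t h => h.symm))
  have hg_line : g ∘ ℓ =ᶠ[𝓝 0] fun _ => 0 := by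
    filter_upwards [eventually_nhdsWithin_iff.1 hg_zero] with t ht
    rcases eq_or_ne t 0 with rfl | h0
    · exact hg_ℓ0
    · exact ht h0
  exact ((hg.hasFDerivAt.comp_hasDerivAt_of_eq 0 hℓ hℓ0).congr_of_eventuallyEq
    hg_line.symm).unique (hasDerivAt_const _ _)

theorem ContDiffAt.differentiableAt_fderiv {f : E → F} {x : E} (hf : ContDiffAt 𝕜 2 f x) :
    DifferentiableAt 𝕜 (fderiv 𝕜 f) x :=
  (hf.fderiv_right (m := 1) le_rfl).differentiableAt one_ne_zero

theorem fderiv_eq_zero_or_fderiv_eq_zero {f : E → F} {g : E → G} {x : E}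
    (hf : DifferentiableAt 𝕜 f x) (hg : DifferentiableAt 𝕜 g x)
    (hfg : ∀ᶠ w in 𝓝 x, f w = 0 ∨ g w = 0) : fderiv 𝕜 f x = 0 ∨ fderiv 𝕜 g x = 0 :=
  ContinuousLinearMap.eq_zero_or_eq_zero_of_forall_apply_eq_zero_or
    (fderiv_apply_eq_zero_or_fderiv_apply_eq_zero hf hg hfg)

end

def slotEval (K M : ℕ) (k : Fin K) :
    (EuclideanSpace ℝ (Fin K × Fin M) →L[ℝ] ℝ) →L[ℝ] EuclideanSpace ℝ (Fin M) :=
  (EuclideanSpace.equiv (Fin M) ℝ).symm.toContinuousLinearMap.comp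
    (ContinuousLinearMap.pi fun m =>
      ContinuousLinearMap.apply ℝ ℝ (slotIncl K M k (EuclideanSpace.single m 1)))

section

variable {K M : ℕ}

theorem slotGrad_eq_comp (q : EuclideanSpace ℝ (Fin K × Fin M) → ℝ) (k : Fin K) :
    slotGrad q k = slotEval K M k ∘ fderiv ℝ q := rfl

theorem slotEval_apply (k : Fin K) (φ : EuclideanSpace ℝ (Fin K × Fin M) →L[ℝ] ℝ) (m : Fin M) :
    slotEval K M k φ m = φ (slotIncl K M k (EuclideanSpace.single m 1)) := rfl

theorem slotEval_eq_zero_iff (k : Fin K) (φ : EuclideanSpace ℝ (Fin K × Fin M) →L[ℝ] ℝ) :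
    slotEval K M k φ = 0 ↔ φ.comp (slotIncl K M k) = 0 := by
  constructor
  · intro h
    refine ContinuousLinearMap.coe_injective
      ((EuclideanSpace.basisFun (Fin M) ℝ).toBasis.ext fun m => ?_)
    simpa [slotEval_apply] using congrArg (· m) h
  · intro h
    ext m
    simpa [slotEval_apply] using congrArg (· (EuclideanSpace.single m 1)) h

theorem hessBlock_eq_zero_iff {q : EuclideanSpace ℝ (Fin K × Fin M) → ℝ}
    {z : EuclideanSpace ℝ (Fin K × Fin M)} (hq : DifferentiableAt ℝ (fderiv ℝ q) z) (i j : Fin K) :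
    hessBlock q i j z = 0 ↔
      ∀ u v, fderiv ℝ (fderiv ℝ q) z (slotIncl K M j v) (slotIncl K M i u) = 0 := by
  have hD : fderiv ℝ (slotGrad q i) z = (slotEval K M i).comp (fderiv ℝ (fderiv ℝ q) z) := by
    rw [slotGrad_eq_comp, ((slotEval K M i).hasFDerivAt.comp z hq.hasFDerivAt).fderiv]
  simp only [hessBlock, hD, ContinuousLinearMap.ext_iff, ContinuousLinearMap.comp_apply,
    zero_apply, slotEval_eq_zero_iff]
  exact forall_comm

theorem hessBlock_eq_zero_comm {q : EuclideanSpace ℝ (Fin K × Fin M) → ℝ}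
    {z : EuclideanSpace ℝ (Fin K × Fin M)} (hq : ContDiffAt ℝ 2 q z) (i j : Fin K) :
    hessBlock q i j z = 0 ↔ hessBlock q j i z = 0 := by
  rw [hessBlock_eq_zero_iff hq.differentiableAt_fderiv, hessBlock_eq_zero_iff
    hq.differentiableAt_fderiv, forall_comm]
  simp only [(hq.isSymmSndFDerivAt (by simp)) (slotIncl K M j _)]

theorem differentiableAt_slotGrad {q : EuclideanSpace ℝ (Fin K × Fin M) → ℝ}
    {z : EuclideanSpace ℝ (Fin K × Fin M)} (hq : DifferentiableAt ℝ (fderiv ℝ q) z) (k : Fin K) :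
    DifferentiableAt ℝ (slotGrad q k) z :=
  (slotEval K M k).differentiableAt.comp z hq

end

theorem cross_slot_hessian_blocks_vanish_general
    (K M : ℕ)
    (U : Set (EuclideanSpace ℝ (Fin K × Fin M))) (hU : IsOpen U)
    (q : EuclideanSpace ℝ (Fin K × Fin M) → ℝ) (hq : ContDiffOn ℝ 2 q U)
    (hgrad : ∀ z ∈ U, ∀ k j : Fin K, k ≠ j →
      ¬(slotGrad q k z ≠ 0 ∧ slotGrad q j z ≠ 0)) :
    ∀ z ∈ U, ∀ i j : Fin K, i ≠ j → hessBlock q i j z = 0 := by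
  intro z hz i j hij
  have hqz : ContDiffAt ℝ 2 q z := hq.contDiffAt (hU.mem_nhds hz)
  have hdisj : ∀ᶠ w in 𝓝 z, slotGrad q i w = 0 ∨ slotGrad q j w = 0 := by
    filter_upwards [hU.mem_nhds hz] with w hw
    simpa only [not_and_or, not_not] using hgrad w hw i j hij
  rcases fderiv_eq_zero_or_fderiv_eq_zero (differentiableAt_slotGrad hqz.differentiableAt_fderiv i)
    (differentiableAt_slotGrad hqz.differentiableAt_fderiv j) hdisj with h | h
  · simp [hessBlock, h]
  · rw [hessBlock_eq_zero_comm hqz]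
    simp [hessBlock, h]

/-- If at every point of an open set no two distinct slot gradients of a
C² function are simultaneously nonzero, then all cross-slot Hessian blocks vanish. -/
theorem cross_slot_hessian_blocks_vanish
    (K M : ℕ) (hK : 0 < K) (hM : 0 < M)
    (U : Set (EuclideanSpace ℝ (Fin K × Fin M))) (hU : IsOpen U)
    (q : EuclideanSpace ℝ (Fin K × Fin M) → ℝ) (hq : ContDiffOn ℝ 2 q U)
    (hgrad : ∀ z ∈ U, ∀ k j : Fin K, k ≠ j →
      ¬(slotGrad q k z ≠ 0 ∧ slotGrad q j z ≠ 0)) :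
    ∀ z ∈ U, ∀ i j : Fin K, i ≠ j → hessBlock q i j z = 0 :=
  cross_slot_hessian_blocks_vanish_general K M U hU q hq hgrad

end
end
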